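/- arXiv:2101.00763 — 2 statements merged into one kernel-verified Lean document; each statement's English description precedes it below -/
import Mathlib

section
/- Let $(d_n)_{n\geq 1}$ be a sequence of reals with $|d_n| \leq q < 1$ for all $n$, and let $(a_n)_{n\geq 0}$ be a sequence of reals. Define $b_0 = a_0$ and $b_n = a_n - d_n a_{n-1}$ for $n \geq 1$. If $(b_n) \in \ell^2$, then $(a_n) \in \ell^2$, and moreover $\|a\|_{\ell^2} \leq C(q) \|b\|_{\ell^2}$ for a constant $C(q)$ depending only on $q$. -/
/-- **Schur-test lemma for perturbed sequences.**
If `|dₙ| ≤ q < 1` and `b₀ = a₀`, `bₙ = aₙ - dₙ aₙ₋₁` for `n ≥ 1`, then `b ∈ ℓ²` implies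
`a ∈ ℓ²` with `‖a‖_{ℓ²} ≤ C(q) ‖b‖_{ℓ²}` for a constant `C(q)` depending only on `q`. -/
theorem stmt0 (q : ℝ) (hq0 : 0 ≤ q) (hq1 : q < 1) :
    ∃ C : ℝ, 0 < C ∧ ∀ (a d : ℕ → ℝ), (∀ n : ℕ, 1 ≤ n → |d n| ≤ q) →
      Summable (fun n : ℕ => ((if n = 0 then a 0 else a n - d n * a (n - 1)) : ℝ) ^ 2) →
      Summable (fun n : ℕ => (a n) ^ 2) ∧
        Real.sqrt (∑' n : ℕ, (a n) ^ 2) ≤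
          C * Real.sqrt (∑' n : ℕ,
            ((if n = 0 then a 0 else a n - d n * a (n - 1)) : ℝ) ^ 2) := by
  have h1q : 0 < 1 - q := by linarith
  have hCpos : 0 < (1 - q)⁻¹ := inv_pos.mpr h1q
  refine ⟨(1 - q)⁻¹, hCpos, ?_⟩
  intro a d hd hb
  set b : ℕ → ℝ := fun n => if n = 0 then a 0 else a n - d n * a (n - 1) with hbdef
  -- geometric sum bound
  have hgeom : ∀ N : ℕ, ∑ m ∈ Finset.range N, q ^ m ≤ (1 - q)⁻¹ := by
    intro N
    have := Summable.sum_le_tsum (Finset.range N)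
      (fun i _ => pow_nonneg hq0 i) (summable_geometric_of_lt_one hq0 hq1)
    rwa [tsum_geometric_of_lt_one hq0 hq1] at this
  -- representation a n = ∑ k ≤ n, (∏ j ∈ Ioc k n, d j) * b k
  have key : ∀ n, a n = ∑ k ∈ Finset.range (n + 1), (∏ j ∈ Finset.Ioc k n, d j) * b k := by
    intro n
    induction n with
    | zero => simp [b]
    | succ n ih =>
      rw [Finset.sum_range_succ]
      have hcongr : ∀ k ∈ Finset.range (n + 1), (∏ j ∈ Finset.Ioc k (n + 1), d j) * b k
          = d (n + 1) * ((∏ j ∈ Finset.Ioc k n, d j) * b k) := by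
        intro k hk
        rw [Finset.mem_range] at hk
        rw [Finset.prod_Ioc_succ_top (by omega : k ≤ n)]
        ring
      rw [Finset.sum_congr rfl hcongr, ← Finset.mul_sum, ← ih]
      have hbn : b (n + 1) = a (n + 1) - d (n + 1) * a n := by simp [b]
      simp [hbn]
  -- |a n| ≤ ∑ k ≤ n, q^(n-k) |b k|
  have habs : ∀ n, |a n| ≤ ∑ k ∈ Finset.range (n + 1), q ^ (n - k) * |b k| := by
    intro n
    rw [key n]
    refine (Finset.abs_sum_le_sum_abs _ _).trans (Finset.sum_le_sum fun k hk => ?_)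
    rw [Finset.mem_range] at hk
    rw [abs_mul]
    refine mul_le_mul_of_nonneg_right ?_ (abs_nonneg _)
    calc |∏ j ∈ Finset.Ioc k n, d j| = ∏ j ∈ Finset.Ioc k n, |d j| := by
          rw [Finset.abs_prod]
      _ ≤ ∏ j ∈ Finset.Ioc k n, q := by
          refine Finset.prod_le_prod (fun j _ => abs_nonneg _) (fun j hj => ?_)
          rw [Finset.mem_Ioc] at hj
          exact hd j (by omega)
      _ = q ^ (n - k) := by rw [Finset.prod_const, Nat.card_Ioc]
  -- pointwise square bound via Cauchy-Schwarz
  have hsq : ∀ n, (a n) ^ 2 ≤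
      (1 - q)⁻¹ * ∑ k ∈ Finset.range (n + 1), q ^ (n - k) * (b k) ^ 2 := by
    intro n
    have h1 : (a n) ^ 2 ≤ (∑ k ∈ Finset.range (n + 1), q ^ (n - k) * |b k|) ^ 2 := by
      rw [← sq_abs]
      exact pow_le_pow_left₀ (abs_nonneg _) (habs n) 2
    have hCS := Finset.sum_mul_sq_le_sq_mul_sq (Finset.range (n + 1))
      (fun k => Real.sqrt (q ^ (n - k))) (fun k => Real.sqrt (q ^ (n - k)) * |b k|)
    have heq1 : ∀ k, Real.sqrt (q ^ (n - k)) * (Real.sqrt (q ^ (n - k)) * |b k|)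
        = q ^ (n - k) * |b k| := by
      intro k
      rw [← mul_assoc, Real.mul_self_sqrt (pow_nonneg hq0 _)]
    have heq2 : ∀ k, (Real.sqrt (q ^ (n - k))) ^ 2 = q ^ (n - k) := fun k =>
      Real.sq_sqrt (pow_nonneg hq0 _)
    have heq3 : ∀ k, (Real.sqrt (q ^ (n - k)) * |b k|) ^ 2 = q ^ (n - k) * (b k) ^ 2 := by
      intro k
      rw [mul_pow, heq2, sq_abs]
    simp only [heq1, heq2, heq3] at hCS
    have hsum1 : ∑ k ∈ Finset.range (n + 1), q ^ (n - k) ≤ (1 - q)⁻¹ := by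
      have : ∑ k ∈ Finset.range (n + 1), q ^ (n + 1 - 1 - k)
          = ∑ k ∈ Finset.range (n + 1), q ^ k := Finset.sum_range_reflect (fun k => q ^ k) (n + 1)
      simp only [Nat.add_sub_cancel] at this
      rw [this]
      exact hgeom (n + 1)
    have hsum2nn : 0 ≤ ∑ k ∈ Finset.range (n + 1), q ^ (n - k) * (b k) ^ 2 :=
      Finset.sum_nonneg fun k _ => mul_nonneg (pow_nonneg hq0 _) (sq_nonneg _)
    calc (a n) ^ 2 ≤ (∑ k ∈ Finset.range (n + 1), q ^ (n - k) * |b k|) ^ 2 := h1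
      _ ≤ (∑ k ∈ Finset.range (n + 1), q ^ (n - k)) *
            ∑ k ∈ Finset.range (n + 1), q ^ (n - k) * (b k) ^ 2 := hCS
      _ ≤ (1 - q)⁻¹ * ∑ k ∈ Finset.range (n + 1), q ^ (n - k) * (b k) ^ 2 :=
          mul_le_mul_of_nonneg_right hsum1 hsum2nn
  -- sum of b² bound
  set S : ℝ := ∑' n, (b n) ^ 2 with hS
  have hSnn : 0 ≤ S := tsum_nonneg fun n => sq_nonneg _
  -- partial sum bound
  have hpartial : ∀ N : ℕ, ∑ n ∈ Finset.range N, (a n) ^ 2 ≤ (1 - q)⁻¹ ^ 2 * S := by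
    intro N
    have hswap : ∑ n ∈ Finset.range N, ∑ k ∈ Finset.range (n + 1), q ^ (n - k) * (b k) ^ 2
        = ∑ k ∈ Finset.range N, ∑ n ∈ Finset.Ico k N, q ^ (n - k) * (b k) ^ 2 := by
      refine Finset.sum_comm' fun n k => ?_
      simp only [Finset.mem_range, Finset.mem_Ico]
      omega
    have hinner : ∀ k, ∑ n ∈ Finset.Ico k N, q ^ (n - k) * (b k) ^ 2
        ≤ (1 - q)⁻¹ * (b k) ^ 2 := by
      intro k
      rw [Finset.sum_Ico_eq_sum_range]
      simp only [Nat.add_sub_cancel_left]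
      rw [← Finset.sum_mul]
      exact mul_le_mul_of_nonneg_right (hgeom _) (sq_nonneg _)
    calc ∑ n ∈ Finset.range N, (a n) ^ 2
        ≤ ∑ n ∈ Finset.range N,
            (1 - q)⁻¹ * ∑ k ∈ Finset.range (n + 1), q ^ (n - k) * (b k) ^ 2 :=
          Finset.sum_le_sum fun n _ => hsq n
      _ = (1 - q)⁻¹ * ∑ n ∈ Finset.range N,
            ∑ k ∈ Finset.range (n + 1), q ^ (n - k) * (b k) ^ 2 := by rw [Finset.mul_sum]
      _ = (1 - q)⁻¹ * ∑ k ∈ Finset.range N,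
            ∑ n ∈ Finset.Ico k N, q ^ (n - k) * (b k) ^ 2 := by rw [hswap]
      _ ≤ (1 - q)⁻¹ * ∑ k ∈ Finset.range N, (1 - q)⁻¹ * (b k) ^ 2 := by
          refine mul_le_mul_of_nonneg_left (Finset.sum_le_sum fun k _ => hinner k) hCpos.le
      _ = (1 - q)⁻¹ ^ 2 * ∑ k ∈ Finset.range N, (b k) ^ 2 := by
          rw [← Finset.mul_sum]; ring
      _ ≤ (1 - q)⁻¹ ^ 2 * S := by
          refine mul_le_mul_of_nonneg_left ?_ (by positivity)
          exact Summable.sum_le_tsum _ (fun k _ => sq_nonneg _) hb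
  have hsummable : Summable (fun n : ℕ => (a n) ^ 2) :=
    summable_of_sum_range_le (fun n => sq_nonneg _) hpartial
  refine ⟨hsummable, ?_⟩
  have htsum : ∑' n, (a n) ^ 2 ≤ (1 - q)⁻¹ ^ 2 * S :=
    Real.tsum_le_of_sum_range_le (fun n => sq_nonneg _) hpartial
  calc Real.sqrt (∑' n, (a n) ^ 2) ≤ Real.sqrt ((1 - q)⁻¹ ^ 2 * S) := Real.sqrt_le_sqrt htsum
    _ = (1 - q)⁻¹ * Real.sqrt S := by
        rw [Real.sqrt_mul (sq_nonneg _), Real.sqrt_sq hCpos.le]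
end

section
/- Let $\mathcal{T} \times \mathcal{T}$ denote the set of dyadic rectangles $R = I \times J$ with $I, J$ dyadic subintervals of $[0,1)$. For $A > 0$ large enough, define $m(R, R') = (|R|/|R'|)^A$ if $R \subseteq R'$, $m(R,R') = (|R'|/|R|)^A$ if $R' \subsetneq R$, and $0$ if neither rectangle contains the other (where containment means containment of both coordinate intervals). Then the matrix $m$ defines a bounded operator on $\ell^2(\mathcal{T} \times \mathcal{T})$ provided $A$ is sufficiently large. -/
/-! For `A ≥ 2` the matrix `m` is dominated entrywise by the tensor square of the
one-dimensional kernel `k(I, J) = 4^(-|n_I - n_J|)` on comparable dyadic intervals (and `0` on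
incomparable ones). A dyadic interval has one ancestor and `2^d` descendants `d` levels away from
it, so every row sum of `k` is at most `∑_{d ∈ ℤ} 2^(-|d|) = 3`. Hence the row and column sums of
`m` are at most `9`, and the Schur test bounds the operator norm of `m` on `ℓ²` by `9`. -/

open scoped Classical

/-- A dyadic subinterval `[k 2^(-n), (k+1) 2^(-n))` of `[0,1)`. -/
structure UDI where
  n : ℕ
  k : ℕ
  hk : k < 2 ^ n

namespace UDI

/-- The length `|I| = 2^(-n)`. -/
noncomputable def len (I : UDI) : ℝ := (2:ℝ) ^ (-(I.n : ℤ))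

/-- The underlying interval. -/
noncomputable def set (I : UDI) : Set ℝ := Set.Ico ((I.k : ℝ) * I.len) (((I.k : ℝ) + 1) * I.len)

/-- Containment of dyadic intervals. -/
def Sub (I J : UDI) : Prop := I.set ⊆ J.set

end UDI

/-- The area `|R| = |I|·|J|` of a dyadic rectangle `R = I × J`. -/
noncomputable def area (R : UDI × UDI) : ℝ := R.1.len * R.2.len

/-- Containment of dyadic rectangles: containment of both coordinate intervals. -/
def SubR (R R' : UDI × UDI) : Prop := UDI.Sub R.1 R'.1 ∧ UDI.Sub R.2 R'.2

/-- The Schur matrix on the bi-tree: `m(R,R') = (|R|/|R'|)^A` if `R ⊆ R'`,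
`(|R'|/|R|)^A` if `R' ⊊ R`, and `0` if neither contains the other. -/
noncomputable def schurMatR (A : ℝ) (R R' : UDI × UDI) : ℝ :=
  if SubR R R' then (area R / area R') ^ A
  else if SubR R' R then (area R' / area R) ^ A
  else 0

open scoped ENNReal NNReal

section SchurTest

variable {ι κ : Type*}

theorem sq_tsum_le_tsum_mul_tsum_of_sq_le_mul {r f g : ι → ℝ} (hf : ∀ i, 0 ≤ f i)
    (hg : ∀ i, 0 ≤ g i) (hrfg : ∀ i, r i ^ 2 ≤ f i * g i) (hr : Summable r) (hfs : Summable f)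
    (hgs : Summable g) : (∑' i, r i) ^ 2 ≤ (∑' i, f i) * ∑' i, g i :=
  le_of_tendsto' (hr.hasSum.pow 2) fun s =>
    (Finset.sum_sq_le_sum_mul_sum_of_sq_le_mul s (fun i _ => hf i) (fun i _ => hg i)
      fun i _ => hrfg i).trans <|
    mul_le_mul (hfs.sum_le_tsum s fun i _ => hf i) (hgs.sum_le_tsum s fun i _ => hg i)
      (Finset.sum_nonneg fun i _ => hg i) (tsum_nonneg hf)

theorem summable_and_tsum_le_of_tsum_ofReal_le {f : ι → ℝ} {B : ℝ≥0} (hf : ∀ i, 0 ≤ f i)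
    (h : ∑' i, ENNReal.ofReal (f i) ≤ B) : Summable f ∧ ∑' i, f i ≤ B := by
  have hfs : Summable f :=
    (ENNReal.summable_toReal (ne_top_of_le_ne_top ENNReal.coe_ne_top h)).congr
      fun i => ENNReal.toReal_ofReal (hf i)
  refine ⟨hfs, ?_⟩
  rw [← ENNReal.ofReal_tsum_of_nonneg hf hfs] at h
  simpa using (ENNReal.ofReal_le_iff_le_toReal ENNReal.coe_ne_top).1 h

theorem summable_and_tsum_tsum_mul_le {K : ι → κ → ℝ} {b : κ → ℝ} {B : ℝ}
    (hK : ∀ i j, 0 ≤ K i j) (hb : ∀ j, 0 ≤ b j) (hbs : Summable b)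
    (hcol : ∀ j, Summable fun i => K i j) (hcol_le : ∀ j, ∑' i, K i j ≤ B) :
    Summable (fun i => ∑' j, K i j * b j) ∧ ∑' i, ∑' j, K i j * b j ≤ B * ∑' j, b j := by
  have hcol_mul : Summable fun j => (∑' i, K i j) * b j :=
    (hbs.mul_left B).of_nonneg_of_le (fun j => mul_nonneg (tsum_nonneg (hK · j)) (hb j))
      fun j => mul_le_mul_of_nonneg_right (hcol_le j) (hb j)
  have hprod_swap : Summable fun p : κ × ι => K p.2 p.1 * b p.1 := by
    have h0 : 0 ≤ fun p : κ × ι => K p.2 p.1 * b p.1 := fun p => mul_nonneg (hK _ _) (hb _)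
    refine (summable_prod_of_nonneg h0).2 ⟨fun j => (hcol j).mul_right (b j), ?_⟩
    simpa only [tsum_mul_right] using hcol_mul
  have hprod : Summable fun p : ι × κ => K p.1 p.2 * b p.2 := hprod_swap.prod_symm
  refine ⟨hprod.prod, ?_⟩
  calc ∑' i, ∑' j, K i j * b j = ∑' j, (∑' i, K i j) * b j := by
        rw [← hprod.tsum_comm]; simp only [tsum_mul_right]
    _ ≤ ∑' j, B * b j :=
        hcol_mul.tsum_le_tsum (fun j => mul_le_mul_of_nonneg_right (hcol_le j) (hb j))
          (hbs.mul_left B)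
    _ = B * ∑' j, b j := tsum_mul_left

theorem schur_test {K : ι → κ → ℝ} {B : ℝ≥0} (hK : ∀ i j, 0 ≤ K i j)
    (hrow : ∀ i, ∑' j, ENNReal.ofReal (K i j) ≤ B)
    (hcol : ∀ j, ∑' i, ENNReal.ofReal (K i j) ≤ B)
    {a : κ → ℝ} (ha : Summable fun j => a j ^ 2) :
    (∀ i, Summable fun j => K i j * a j) ∧
    Summable (fun i => (∑' j, K i j * a j) ^ 2) ∧
    ∑' i, (∑' j, K i j * a j) ^ 2 ≤ (B : ℝ) ^ 2 * ∑' j, a j ^ 2 := by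
  choose hrow_sum hrow_le using fun i => summable_and_tsum_le_of_tsum_ofReal_le (hK i) (hrow i)
  choose hcol_sum hcol_le using fun j =>
    summable_and_tsum_le_of_tsum_ofReal_le (fun i => hK i j) (hcol j)
  have hKB i j : K i j ≤ B := ((hrow_sum i).le_tsum j fun j _ => hK i j).trans (hrow_le i)
  have hKa2 i : Summable fun j => K i j * a j ^ 2 :=
    (ha.mul_left (B : ℝ)).of_nonneg_of_le (fun j => mul_nonneg (hK i j) (sq_nonneg _))
      fun j => mul_le_mul_of_nonneg_right (hKB i j) (sq_nonneg _)
  -- `|x| ≤ 1 + x ^ 2`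
  have hKa i : Summable fun j => K i j * a j :=
    ((hrow_sum i).add (hKa2 i)).of_norm_bounded fun j => by
      rw [Real.norm_eq_abs, abs_mul, abs_of_nonneg (hK i j), ← mul_one_add]
      exact mul_le_mul_of_nonneg_left (by nlinarith [abs_nonneg (a j), sq_abs (a j)]) (hK i j)
  have hrow_cs i : (∑' j, K i j * a j) ^ 2 ≤ B * ∑' j, K i j * a j ^ 2 :=
    (sq_tsum_le_tsum_mul_tsum_of_sq_le_mul (hK i) (fun j => mul_nonneg (hK i j) (sq_nonneg _))
      (fun j => le_of_eq (by ring)) (hKa i) (hrow_sum i) (hKa2 i)).trans <|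
      mul_le_mul_of_nonneg_right (hrow_le i)
        (tsum_nonneg fun j => mul_nonneg (hK i j) (sq_nonneg _))
  obtain ⟨hS, hS_le⟩ :=
    summable_and_tsum_tsum_mul_le hK (fun j => sq_nonneg (a j)) ha hcol_sum hcol_le
  have hsq : Summable fun i => (∑' j, K i j * a j) ^ 2 :=
    (hS.mul_left (B : ℝ)).of_nonneg_of_le (fun i => sq_nonneg _) hrow_cs
  refine ⟨hKa, hsq, ?_⟩
  calc ∑' i, (∑' j, K i j * a j) ^ 2 ≤ ∑' i, B * ∑' j, K i j * a j ^ 2 :=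
        hsq.tsum_le_tsum hrow_cs (hS.mul_left (B : ℝ))
    _ = B * ∑' i, ∑' j, K i j * a j ^ 2 := tsum_mul_left
    _ ≤ B * (B * ∑' j, a j ^ 2) := mul_le_mul_of_nonneg_left hS_le B.2
    _ = (B : ℝ) ^ 2 * ∑' j, a j ^ 2 := by ring

end SchurTest

theorem ENNReal.tsum_inv_two_pow_natAbs : ∑' z : ℤ, (2⁻¹ : ℝ≥0∞) ^ z.natAbs = 3 := by
  rw [tsum_of_nat_of_neg_add_one ENNReal.summable ENNReal.summable]
  simp only [Int.natAbs_natCast, Int.natAbs_neg]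
  have : ∀ n : ℕ, ((n : ℤ) + 1).natAbs = n + 1 := fun n => by omega
  simp only [this, ENNReal.tsum_geometric_add_one, ENNReal.tsum_geometric_two,
    ENNReal.one_sub_inv_two, inv_inv]
  rw [ENNReal.inv_mul_cancel two_ne_zero ENNReal.ofNat_ne_top]
  norm_num

theorem ENNReal.two_pow_mul_inv_two_pow_le {m d : ℕ} (h : m ≤ d) :
    (2 : ℝ≥0∞) ^ m * 2⁻¹ ^ (2 * d) ≤ 2⁻¹ ^ d :=
  calc (2 : ℝ≥0∞) ^ m * 2⁻¹ ^ (2 * d) ≤ 2 ^ d * (2⁻¹ ^ d * 2⁻¹ ^ d) := by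
        rw [two_mul, pow_add]; gcongr; exact one_le_two
    _ = (2 * 2⁻¹) ^ d * 2⁻¹ ^ d := by rw [mul_pow, mul_assoc]
    _ = 2⁻¹ ^ d := by rw [ENNReal.mul_inv_cancel two_ne_zero ENNReal.ofNat_ne_top, one_pow, one_mul]

namespace UDI

theorem len_eq (I : UDI) : I.len = ((2 : ℝ) ^ I.n)⁻¹ := by rw [len, zpow_neg, zpow_natCast]

theorem sub_iff {I J : UDI} :
    I.Sub J ↔ J.k * 2 ^ I.n ≤ I.k * 2 ^ J.n ∧ (I.k + 1) * 2 ^ J.n ≤ (J.k + 1) * 2 ^ I.n := by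
  have hlt : (I.k : ℝ) * I.len < (I.k + 1) * I.len := by
    rw [len_eq]; gcongr; linarith
  rw [Sub, set, set, Set.Ico_subset_Ico_iff hlt, len_eq, len_eq]
  simp only [← div_eq_mul_inv]
  rw [div_le_div_iff₀ (by positivity) (by positivity),
    div_le_div_iff₀ (by positivity) (by positivity)]
  norm_cast

theorem Sub.n_le {I J : UDI} (h : I.Sub J) : J.n ≤ I.n := by
  obtain ⟨h1, h2⟩ := sub_iff.1 h
  have : 2 ^ J.n ≤ 2 ^ I.n := by nlinarith
  exact (Nat.pow_le_pow_iff_right (by norm_num)).1 this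

theorem Sub.k_mem_Ico {I J : UDI} (h : I.Sub J) :
    I.k ∈ Finset.Ico (J.k * 2 ^ (I.n - J.n)) ((J.k + 1) * 2 ^ (I.n - J.n)) := by
  obtain ⟨h1, h2⟩ := sub_iff.1 h
  obtain ⟨d, hd⟩ := Nat.exists_eq_add_of_le h.n_le
  rw [hd, pow_add] at h1 h2
  rw [hd, Nat.add_sub_cancel_left, Finset.mem_Ico]
  have hpos : 0 < 2 ^ J.n := by positivity
  constructor
  · exact Nat.le_of_mul_le_mul_right (by linarith) hpos
  · exact Nat.le_of_mul_le_mul_right (by linarith) hpos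

theorem Sub.k_eq_div {I J : UDI} (h : I.Sub J) : J.k = I.k / 2 ^ (I.n - J.n) := by
  obtain ⟨h1, h2⟩ := Finset.mem_Ico.1 h.k_mem_Ico
  exact (Nat.div_eq_of_lt_le h1 h2).symm

theorem Sub.len_div_len {I J : UDI} (h : I.Sub J) : I.len / J.len = 2⁻¹ ^ (I.n - J.n) := by
  obtain ⟨d, hd⟩ := Nat.exists_eq_add_of_le h.n_le
  rw [len_eq, len_eq, hd, Nat.add_sub_cancel_left, pow_add, mul_inv, inv_pow]
  field_simp

/-- The positions `k` at level `m` of the dyadic intervals comparable with `I`: its ancestor if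
`m ≤ I.n`, its `2 ^ (m - I.n)` descendants otherwise. -/
def relatives (I : UDI) (m : ℕ) : Finset ℕ :=
  if m ≤ I.n then {I.k / 2 ^ (I.n - m)}
  else Finset.Ico (I.k * 2 ^ (m - I.n)) ((I.k + 1) * 2 ^ (m - I.n))

theorem card_relatives (I : UDI) (m : ℕ) : (I.relatives m).card = 2 ^ (m - I.n) := by
  unfold relatives
  split_ifs with h
  · simp [Nat.sub_eq_zero_of_le h]
  · rw [Nat.card_Ico, add_one_mul, Nat.add_sub_cancel_left]

theorem k_mem_relatives {I J : UDI} (h : I.Sub J ∨ J.Sub I) : J.k ∈ I.relatives J.n := by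
  unfold relatives
  rcases h with h | h
  · rw [if_pos h.n_le, h.k_eq_div, Finset.mem_singleton]
  · split_ifs with hn
    · have hk := h.k_mem_Ico
      simp only [le_antisymm hn h.n_le, Nat.sub_self, pow_zero, mul_one, Nat.div_one,
        Finset.mem_Ico, Finset.mem_singleton] at hk ⊢
      omega
    · exact h.k_mem_Ico

/-- One-dimensional analogue of `schurMatR` at exponent `2`; its tensor square dominates
`schurMatR A` for `A ≥ 2`. -/
noncomputable def treeKernel (I J : UDI) : ℝ≥0∞ :=
  if I.Sub J ∨ J.Sub I then 2⁻¹ ^ (2 * ((J.n : ℤ) - I.n).natAbs) else 0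

theorem treeKernel_comm (I J : UDI) : treeKernel I J = treeKernel J I := by
  unfold treeKernel
  have hdist : ((J.n : ℤ) - I.n).natAbs = ((I.n : ℤ) - J.n).natAbs := by omega
  rw [hdist]
  simp only [or_comm]

theorem tsum_treeKernel_le (I : UDI) : ∑' J, treeKernel I J ≤ 3 := by
  set F : ℕ × ℕ → ℝ≥0∞ := fun p =>
    if p.2 ∈ I.relatives p.1 then 2⁻¹ ^ (2 * ((p.1 : ℤ) - I.n).natAbs) else 0
  have hF (J : UDI) : treeKernel I J ≤ F (J.n, J.k) := by
    unfold treeKernel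
    simp only [F]
    split_ifs with h h'
    · exact le_rfl
    · exact absurd (k_mem_relatives h) h'
    all_goals exact zero_le
  have hlevel (m : ℕ) : ∑' k, F (m, k) ≤ 2⁻¹ ^ ((m : ℤ) - I.n).natAbs := by
    rw [tsum_eq_sum (s := I.relatives m) fun k hk => if_neg hk]
    simp only [Finset.sum_ite_mem, Finset.inter_self, Finset.sum_const, card_relatives,
      nsmul_eq_mul, Nat.cast_pow, Nat.cast_ofNat]
    exact ENNReal.two_pow_mul_inv_two_pow_le (by omega)
  have hinj : Function.Injective fun J : UDI => (J.n, J.k) := by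
    rintro ⟨n, k, _⟩ ⟨n', k', _⟩ h
    cases h
    rfl
  have hshift : Function.Injective fun m : ℕ => (m : ℤ) - I.n := fun m m' h => by
    simpa using h
  calc ∑' J, treeKernel I J ≤ ∑' J : UDI, F (J.n, J.k) := ENNReal.tsum_le_tsum hF
    _ ≤ ∑' p, F p := ENNReal.tsum_comp_le_tsum_of_injective hinj F
    _ = ∑' (m) (k), F (m, k) := ENNReal.tsum_prod'
    _ ≤ ∑' m : ℕ, 2⁻¹ ^ ((m : ℤ) - I.n).natAbs := ENNReal.tsum_le_tsum hlevel
    _ ≤ ∑' z : ℤ, 2⁻¹ ^ z.natAbs :=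
        ENNReal.tsum_comp_le_tsum_of_injective hshift fun z : ℤ => 2⁻¹ ^ z.natAbs
    _ = 3 := ENNReal.tsum_inv_two_pow_natAbs

theorem tsum_treeKernel_mul_treeKernel_le (R : UDI × UDI) :
    ∑' R' : UDI × UDI, treeKernel R.1 R'.1 * treeKernel R.2 R'.2 ≤ 9 := by
  rw [ENNReal.tsum_prod']
  simp only [ENNReal.tsum_mul_left, ENNReal.tsum_mul_right]
  calc (∑' I, treeKernel R.1 I) * ∑' J, treeKernel R.2 J ≤ 3 * 3 :=
        mul_le_mul' (tsum_treeKernel_le _) (tsum_treeKernel_le _)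
    _ = 9 := by norm_num

end UDI

theorem SubR.area_div_area {R R' : UDI × UDI} (h : SubR R R') :
    area R / area R' = 2⁻¹ ^ ((R.1.n - R'.1.n) + (R.2.n - R'.2.n)) := by
  rw [area, area, mul_div_mul_comm, h.1.len_div_len, h.2.len_div_len, pow_add]

theorem ofReal_area_div_area_rpow_le {A : ℝ} (hA : 2 ≤ A) {R R' : UDI × UDI} (h : SubR R R') :
    ENNReal.ofReal ((area R / area R') ^ A) ≤
      UDI.treeKernel R.1 R'.1 * UDI.treeKernel R.2 R'.2 := by
  have hn₁ : ((R'.1.n : ℤ) - R.1.n).natAbs = R.1.n - R'.1.n := by have := h.1.n_le; omega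
  have hn₂ : ((R'.2.n : ℤ) - R.2.n).natAbs = R.2.n - R'.2.n := by have := h.2.n_le; omega
  rw [UDI.treeKernel, UDI.treeKernel, if_pos (Or.inl h.1), if_pos (Or.inl h.2), hn₁, hn₂,
    ← pow_add, ← mul_add, pow_mul', h.area_div_area]
  calc ENNReal.ofReal (((2 : ℝ)⁻¹ ^ (R.1.n - R'.1.n + (R.2.n - R'.2.n))) ^ A)
      ≤ ENNReal.ofReal (((2 : ℝ)⁻¹ ^ (R.1.n - R'.1.n + (R.2.n - R'.2.n))) ^ (2 : ℝ)) :=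
        ENNReal.ofReal_le_ofReal <|
          Real.rpow_le_rpow_of_exponent_ge (by positivity)
            (pow_le_one₀ (by norm_num) (by norm_num)) hA
    _ = _ := by
        rw [Real.rpow_two, ENNReal.ofReal_pow (by positivity), ENNReal.ofReal_pow (by norm_num),
          ENNReal.ofReal_inv_of_pos two_pos, ENNReal.ofReal_ofNat]

theorem area_pos (R : UDI × UDI) : 0 < area R := by
  rw [area, UDI.len_eq, UDI.len_eq]
  positivity

theorem schurMatR_nonneg (A : ℝ) (R R' : UDI × UDI) : 0 ≤ schurMatR A R R' := by
  have := area_pos R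
  have := area_pos R'
  unfold schurMatR
  split_ifs <;> positivity

theorem ofReal_schurMatR_le {A : ℝ} (hA : 2 ≤ A) (R R' : UDI × UDI) :
    ENNReal.ofReal (schurMatR A R R') ≤ UDI.treeKernel R.1 R'.1 * UDI.treeKernel R.2 R'.2 := by
  unfold schurMatR
  split_ifs with h h'
  · exact ofReal_area_div_area_rpow_le hA h
  · rw [UDI.treeKernel_comm R.1, UDI.treeKernel_comm R.2]
    exact ofReal_area_div_area_rpow_le hA h'
  · simp

/-- **Schur-test boundedness on the dyadic bi-tree.** For `A` sufficiently large the matrix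
`m` defines a bounded operator on `ℓ²` of the dyadic rectangles. -/
theorem stmt2 :
    ∃ A₀ : ℝ, 0 < A₀ ∧ ∀ A : ℝ, A₀ ≤ A →
      ∃ C : ℝ, 0 < C ∧ ∀ a : UDI × UDI → ℝ, Summable (fun R => (a R) ^ 2) →
        (∀ R : UDI × UDI, Summable fun R' => schurMatR A R R' * a R') ∧
        Summable (fun R => (∑' R', schurMatR A R R' * a R') ^ 2) ∧
        ∑' R, (∑' R', schurMatR A R R' * a R') ^ 2 ≤ C ^ 2 * ∑' R, (a R) ^ 2 := by
  refine ⟨2, two_pos, fun A hA => ⟨9, by norm_num, fun a ha => ?_⟩⟩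
  have hrow (R : UDI × UDI) : ∑' R', ENNReal.ofReal (schurMatR A R R') ≤ (9 : ℝ≥0) :=
    (ENNReal.tsum_le_tsum fun R' => ofReal_schurMatR_le hA R R').trans <| by
      simpa using UDI.tsum_treeKernel_mul_treeKernel_le R
  have hcol (R' : UDI × UDI) : ∑' R, ENNReal.ofReal (schurMatR A R R') ≤ (9 : ℝ≥0) :=
    (ENNReal.tsum_le_tsum fun R => ofReal_schurMatR_le hA R R').trans <| by
      simpa [UDI.treeKernel_comm _ R'.1, UDI.treeKernel_comm _ R'.2] using
        UDI.tsum_treeKernel_mul_treeKernel_le R'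
  simpa using schur_test (schurMatR_nonneg A) hrow hcol ha
end
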